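/- arXiv:2306.17478 — 2 statements merged into one kernel-verified Lean document; each statement's English description precedes it below -/
import Mathlib

section
/- Let π₊, π₋ be real numbers with π₊ > 0, π₋ > 0 and π₊ + π₋ = 1, let μ₊, μ₋ ∈ ℝ, and let σ₊², σ₋² ∈ ℝ. Define V(m) = (σ₊² + (μ₊ − m)²)/π₊ + (σ₋² + (μ₋ − m)²)/π₋ − (μ₊ − μ₋)² for m ∈ ℝ. Then V attains its minimum over ℝ at the unique point m* = π₋·μ₊ + π₊·μ₋ (the CFACE); i.e., V(m) > V(m*) for all m ≠ m*. -/
/-!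
Writing `m* = π₋μ₊ + π₊μ₋`, one has `μ₊ - m* = π₊(μ₊ - μ₋)` and `μ₋ - m* = -π₋(μ₊ - μ₋)`, so
completing the square gives `V m = V m* + (π₊⁻¹ + π₋⁻¹) (m - m*)²`, a parabola with positive
leading coefficient and vertex at `m*`.
-/

theorem sq_sub_div_add_sq_sub_div_eq {p q : ℝ} (hp : p ≠ 0) (hq : q ≠ 0) (hpq : p + q = 1)
    (a b m : ℝ) :
    (a - m) ^ 2 / p + (b - m) ^ 2 / q = (p⁻¹ + q⁻¹) * (m - (q * a + p * b)) ^ 2 + (a - b) ^ 2 := by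
  obtain rfl : q = 1 - p := by linarith
  field_simp
  ring

theorem strict_minimizer_of_eq_mul_sq_add {f : ℝ → ℝ} {c m₀ d : ℝ} (hc : 0 < c)
    (hf : ∀ m, f m = c * (m - m₀) ^ 2 + d) :
    (∀ m, f m₀ ≤ f m) ∧ ∀ m, m ≠ m₀ → f m₀ < f m := by
  refine ⟨fun m => ?_, fun m hm => ?_⟩
  · rw [hf, hf, sub_self]
    nlinarith [sq_nonneg (m - m₀)]
  · have : 0 < (m - m₀) ^ 2 := by positivity [sub_ne_zero.mpr hm]
    rw [hf, hf, sub_self]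
    nlinarith

/-- Theorem 2 of the paper: the conditional variance
`V(m) = (σp2 + (μp − m)²)/πp + (σn2 + (μn − m)²)/πn − (μp − μn)²`
of the transformed outcome attains its minimum over `ℝ` at the unique
point `m* = πn·μp + πp·μn` (the CFACE); i.e. `V(m) > V(m*)` for `m ≠ m*`. -/
theorem cface_minimizes_variance
    (πp πn μp μn σp2 σn2 : ℝ)
    (hπp : 0 < πp) (hπn : 0 < πn) (hsum : πp + πn = 1)
    (V : ℝ → ℝ)
    (hV : ∀ m, V m = (σp2 + (μp - m) ^ 2) / πp + (σn2 + (μn - m) ^ 2) / πn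
        - (μp - μn) ^ 2) :
    (∀ m : ℝ, V (πn * μp + πp * μn) ≤ V m) ∧
    (∀ m : ℝ, m ≠ πn * μp + πp * μn → V (πn * μp + πp * μn) < V m) := by
  refine strict_minimizer_of_eq_mul_sq_add (c := πp⁻¹ + πn⁻¹) (d := σp2 / πp + σn2 / πn)
    (by positivity) fun m => ?_
  have hsq := sq_sub_div_add_sq_sub_div_eq hπp.ne' hπn.ne' hsum μp μn m
  rw [hV, add_div, add_div]
  linarith
end

section
/- Let p, n be positive natural numbers. Let π₊, π₋ be real numbers with π₊ ≠ 0, π₋ ≠ 0 and π₊ + π₋ = 1 (write π_{+1} = π₊, π_{−1} = π₋, and π_{−a} for the opposite arm's probability). Let x₁, …, x_n ∈ ℝ^p, y₁, …, y_n ∈ ℝ, a₁, …, a_n ∈ {−1, +1}, and v_{+1}, v_{−1} ∈ ℝ^p. Then Σ_{i=1}^{n} [ (aᵢ/π_{aᵢ})·(yᵢ − Σ_{a ∈ {−1,+1}} π_{−a}·⟨v_a, xᵢ⟩) − Σ_{a ∈ {−1,+1}} a·⟨v_a, xᵢ⟩ ]² = Σ_{a ∈ {−1,+1}} Σ_{i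 : aᵢ = a} [ (a/π_a)·yᵢ − (a/π_a)·⟨v_a, xᵢ⟩ ]², where ⟨·,·⟩ is the Euclidean inner product on ℝ^p. -/
open Matrix Finset

/-!
For a sample in arm `t`, the term `π(-t)·⟨v t, x⟩` inside the bracket, rescaled by `t / π t`,
combines with the CATE term `t·⟨v t, x⟩` into `(t / π t)·⟨v t, x⟩` because `π t + π (-t) = 1`,
while the contributions of the other arm's coefficients `v (-t)` cancel exactly. So each
residual only involves its own arm, and grouping the samples by arm splits the objective.
-/

lemma Finset.sum_fiberwise_of_maps_to_apply {ι κ M : Type*} [DecidableEq κ] [AddCommMonoid M]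
    {s : Finset ι} {t : Finset κ} {g : ι → κ} (h : ∀ i ∈ s, g i ∈ t) (f : κ → ι → M) :
    ∑ k ∈ t, ∑ i ∈ s with g i = k, f k i = ∑ i ∈ s, f (g i) i := by
  rw [← sum_fiberwise_of_maps_to h]
  refine sum_congr rfl fun k _ => sum_congr rfl fun i hi => ?_
  rw [(mem_filter.1 hi).2]

lemma residual_eq_of_mem_arms {π c : ℝ → ℝ} (hπ : π 1 + π (-1) = 1) {t : ℝ}
    (ht : t = 1 ∨ t = -1) (hπt : π t ≠ 0) (y : ℝ) :
    (t / π t) * (y - ∑ s ∈ ({-1, 1} : Finset ℝ), π (-s) * c s)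
        - ∑ s ∈ ({-1, 1} : Finset ℝ), s * c s
      = (t / π t) * y - (t / π t) * c t := by
  rw [sum_pair (by norm_num), sum_pair (by norm_num), neg_neg]
  rcases ht with rfl | rfl
  · rw [eq_sub_of_add_eq' hπ]
    field_simp
    ring
  · rw [eq_sub_of_add_eq hπ]
    field_simp
    ring

theorem objective_separates_over_arms_general
    (p n : ℕ)
    (πp πn : ℝ) (hπp : πp ≠ 0) (hπn : πn ≠ 0) (hsum : πp + πn = 1)
    (π : ℝ → ℝ) (hπ1 : π 1 = πp) (hπm1 : π (-1) = πn)
    (x : Fin n → Fin p → ℝ) (y : Fin n → ℝ)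
    (a : Fin n → ℝ) (ha : ∀ i, a i = 1 ∨ a i = -1)
    (v : ℝ → Fin p → ℝ) :
    ∑ i, ((a i / π (a i)) *
            (y i - ∑ t ∈ ({-1, 1} : Finset ℝ), π (-t) * (v t ⬝ᵥ x i))
          - ∑ t ∈ ({-1, 1} : Finset ℝ), t * (v t ⬝ᵥ x i)) ^ 2
      = ∑ t ∈ ({-1, 1} : Finset ℝ),
          ∑ i ∈ Finset.univ.filter (fun i => a i = t),
            ((t / π t) * y i - (t / π t) * (v t ⬝ᵥ x i)) ^ 2 := by
  have hπ : π 1 + π (-1) = 1 := by rw [hπ1, hπm1, hsum]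
  have hπa : ∀ i, π (a i) ≠ 0 := fun i => by
    rcases ha i with h | h <;> rw [h]
    exacts [hπ1 ▸ hπp, hπm1 ▸ hπn]
  have ha_mem : ∀ i ∈ univ, a i ∈ ({-1, 1} : Finset ℝ) := fun i _ => by
    rcases ha i with h | h <;> simp [h]
  rw [sum_fiberwise_of_maps_to_apply ha_mem
    (fun t i => ((t / π t) * y i - (t / π t) * (v t ⬝ᵥ x i)) ^ 2)]
  exact sum_congr rfl fun i _ => by
    rw [residual_eq_of_mem_arms (c := fun t => v t ⬝ᵥ x i) hπ (ha i) (hπa i)]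

/-- Separability of the combined CATE-estimation objective (Appendix):
with `πp, πn ≠ 0`, `πp + πn = 1`, arm probabilities `π 1 = πp`,
`π (−1) = πn` (so `π (−t)` is the opposite arm's probability), arm
coefficient vectors `v 1 = vp`, `v (−1) = vn`, samples
`(xᵢ, yᵢ, aᵢ)` with `aᵢ ∈ {−1, +1}`, the squared-error objective
`Σᵢ [ (aᵢ/π(aᵢ))·(yᵢ − Σ_t π(−t)·⟨v t, xᵢ⟩) − Σ_t t·⟨v t, xᵢ⟩ ]²`
equals the sum over arms `t ∈ {−1, +1}` of the per-arm inverse-probability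
weighted objective `Σ_{i : aᵢ = t} [ (t/π t)·yᵢ − (t/π t)·⟨v t, xᵢ⟩ ]²`. -/
theorem objective_separates_over_arms
    (p n : ℕ) (hp : 0 < p) (hn : 0 < n)
    (πp πn : ℝ) (hπp : πp ≠ 0) (hπn : πn ≠ 0) (hsum : πp + πn = 1)
    (π : ℝ → ℝ) (hπ1 : π 1 = πp) (hπm1 : π (-1) = πn)
    (x : Fin n → Fin p → ℝ) (y : Fin n → ℝ)
    (a : Fin n → ℝ) (ha : ∀ i, a i = 1 ∨ a i = -1)
    (vp vn : Fin p → ℝ)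
    (v : ℝ → Fin p → ℝ) (hv1 : v 1 = vp) (hvm1 : v (-1) = vn) :
    ∑ i, ((a i / π (a i)) *
            (y i - ∑ t ∈ ({-1, 1} : Finset ℝ), π (-t) * (v t ⬝ᵥ x i))
          - ∑ t ∈ ({-1, 1} : Finset ℝ), t * (v t ⬝ᵥ x i)) ^ 2
      = ∑ t ∈ ({-1, 1} : Finset ℝ),
          ∑ i ∈ Finset.univ.filter (fun i => a i = t),
            ((t / π t) * y i - (t / π t) * (v t ⬝ᵥ x i)) ^ 2 :=
  objective_separates_over_arms_general p n πp πn hπp hπn hsum π hπ1 hπm1 x y a ha v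
end
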